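/- Let s₁, s₂, s₃ ∈ ℝ satisfy either (i) sᵢ+sⱼ ≥ 0 for all i ≠ j and s₁+s₂+s₃ > 3/2, or (ii) sᵢ+sⱼ > 0 for all i ≠ j and s₁+s₂+s₃ ≥ 3/2. Then the trilinear form b extends continuously to V^{s₁} × V^{s₂+1} × V^{s₃}, and there exists a constant c depending only on s₁, s₂, s₃ such that |b(u,v,w)| ≤ c ‖u‖_{s₁} ‖v‖_{s₂+1} ‖w‖_{s₃} for all u ∈ V^{s₁}, v ∈ V^{s₂+1}, w ∈ V^{s₃}. -/

import Mathlib

/-!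
Common setting for the 3D Navier-Stokes equations with constant delay on the torus `𝕋³_L`
(Bessaih, Garrido-Atienza, "Longtime behavior for 3D Navier-Stokes equations with constant
delays").

A divergence-free, mean-zero, `L`-periodic vector field is described through its Fourier
coefficients `û(ζ)`, `ζ = (2π/L)k`, `k ∈ ℤ³`; the spaces `V^s` and the various operators
(`A = -Δ`, the trilinear form `b`, the bilinear operator `B`) are expressed in Fourier modes.
-/

open MeasureTheory Filter

noncomputable section

namespace NS3D

/-- Fourier lattice `ℤ³` indexing the Fourier modes of `L`-periodic fields. -/
abbrev K3 : Type := Fin 3 → ℤ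

/-- A (generalized) vector field on the torus, given by the family of its Fourier
coefficients, indexed by `k ∈ ℤ³` (the frequency being `ζ = (2π/L)k`). -/
abbrev Coeff : Type := K3 → Fin 3 → ℂ

/-- The frequency `ζ = (2π/L) k`. -/
def zeta (L : ℝ) (k : K3) (i : Fin 3) : ℝ := 2 * Real.pi / L * (k i : ℝ)

/-- `|ζ|²`. -/
def zetaNormSq (L : ℝ) (k : K3) : ℝ := ∑ i, zeta L k i ^ 2

/-- `|ζ|`. -/
def zetaNorm (L : ℝ) (k : K3) : ℝ := Real.sqrt (zetaNormSq L k)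

/-- `|û(ζ)|²`. -/
def coefNormSq (c : Fin 3 → ℂ) : ℝ := ∑ i, ‖c i‖ ^ 2

/-- The square `‖u‖_s² = Σ_{ζ≠0} |ζ|^{2s} |û(ζ)|²` of the `V^s` norm. -/
def normVsq (L s : ℝ) (u : Coeff) : ℝ := ∑' k : K3, zetaNorm L k ^ (2 * s) * coefNormSq (u k)

/-- The `V^s` norm. -/
def normV (L s : ℝ) (u : Coeff) : ℝ := Real.sqrt (normVsq L s u)

/-- Membership in `V^s`: mean zero, divergence free, real valued (û(ζ) = conj û(-ζ)),
and finite `V^s` norm. -/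
structure MemV (L s : ℝ) (u : Coeff) : Prop where
  mean_zero : u 0 = 0
  div_free : ∀ k : K3, ∑ j, (zeta L k j : ℂ) * u k j = 0
  reality : ∀ (k : K3) (i : Fin 3), u (-k) i = (starRingEnd ℂ) (u k i)
  norm_summable : Summable fun k : K3 => zetaNorm L k ^ (2 * s) * coefNormSq (u k)

/-- The duality pairing `⟨f,g⟩ = L³ Σ_ζ f̂(ζ)·conj(ĝ(ζ))` between `V^{-s}` and `V^s`
(for real fields it coincides with `∫ f·g dx`). -/
def pairing (L : ℝ) (f g : Coeff) : ℂ :=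
  (L : ℂ) ^ 3 * ∑' k : K3, ∑ i, f k i * (starRingEnd ℂ) (g k i)

/-- The trilinear form `b(u,v,w) = Σ_{i,j} ∫_{𝕋³_L} u_j (∂v_i/∂x_j) w_i dx`,
written in Fourier modes. -/
def btri (L : ℝ) (u v w : Coeff) : ℂ :=
  (L : ℂ) ^ 3 * ∑' (k : K3) (m : K3), ∑ i, ∑ j,
    u k j * (Complex.I * (zeta L m j : ℂ)) * v m i * w (-(k + m)) i

/-- The Stokes operator `A = -Δ`: multiplication by `|ζ|²` in Fourier modes. -/
def Aop (L : ℝ) (u : Coeff) : Coeff := fun k i => (zetaNormSq L k : ℂ) * u k i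

/-- The first (smallest) eigenvalue `λ = (2π/L)²` of the Stokes operator `A`. -/
def lam (L : ℝ) : ℝ := (2 * Real.pi / L) ^ 2

/-- The Leray (Helmholtz) projection onto divergence-free, mean-zero fields. -/
def leray (L : ℝ) (c : Coeff) : Coeff := fun k i =>
  if k = 0 then 0
  else c k i - (zeta L k i : ℂ) * (∑ j, (zeta L k j : ℂ) * c k j) / (zetaNormSq L k : ℂ)

/-- The bilinear operator `B(u,v)` (the Leray projection of `(u·∇)v`), characterized by
`⟨B(u,v),w⟩ = b(u,v,w)` for divergence-free `w`. -/
def Bop (L : ℝ) (u v : Coeff) : Coeff :=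
  leray L fun n i => ∑' m : K3, ∑ j, u (n - m) j * (Complex.I * (zeta L m j : ℂ)) * v m i

/-- `u ∈ L₂(a,b,V^s)`. -/
def MemL2V (L a b s : ℝ) (u : ℝ → Coeff) : Prop :=
  (∀ᵐ t ∂(volume.restrict (Set.Ioo a b)), MemV L s (u t)) ∧
    IntegrableOn (fun t => normVsq L s (u t)) (Set.Ioo a b)

/-- `u ∈ L_∞(a,b,V^s)`. -/
def MemLinftyV (L a b s : ℝ) (u : ℝ → Coeff) : Prop :=
  (∀ᵐ t ∂(volume.restrict (Set.Ioo a b)), MemV L s (u t)) ∧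
    ∃ C : ℝ, ∀ᵐ t ∂(volume.restrict (Set.Ioo a b)), normV L s (u t) ≤ C

/-- `u ∈ C([a,b],V^s)`. -/
def ContOnV (L a b s : ℝ) (u : ℝ → Coeff) : Prop :=
  (∀ t ∈ Set.Icc a b, MemV L s (u t)) ∧
    ∀ t ∈ Set.Icc a b, ∀ ε > 0, ∃ δ > 0, ∀ t' ∈ Set.Icc a b,
      |t' - t| < δ → normV L s (u t' - u t) < ε

/-- `u ∈ C^β([a,b],V^s)` (Hölder continuity). -/
def HolderOnV (L a b β s : ℝ) (u : ℝ → Coeff) : Prop :=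
  ∃ C : ℝ, 0 ≤ C ∧ ∀ t₁ ∈ Set.Icc a b, ∀ t₂ ∈ Set.Icc a b,
    normV L s (u t₂ - u t₁) ≤ C * |t₂ - t₁| ^ β

/-- Smooth real test functions compactly supported in `(a,b)`. -/
def TestOn (a b : ℝ) (φ : ℝ → ℝ) : Prop :=
  (∀ n : ℕ, ContDiff ℝ n φ) ∧ ∀ t, t ∉ Set.Ioo a b → φ t = 0

/-- `u` is a weak solution on `[0,μ]` of the linearized system
`du + (ν A u + B(ψ(t),u)) dt = f dt`, `u(0) = u₀`. -/
def IsLinSol (L ν μ α : ℝ) (f : Coeff) (ψ : ℝ → Coeff) (u0 : Coeff) (u : ℝ → Coeff) : Prop :=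
  MemL2V L 0 μ (1 + α) u ∧ u 0 = u0 ∧
    ∀ v : Coeff, MemV L (α + 1) v → ∀ φ : ℝ → ℝ, TestOn 0 μ φ →
      (-(∫ r in Set.Ioo 0 μ, Complex.ofReal (deriv φ r) * pairing L (u r) v))
          + (ν : ℂ) * (∫ r in Set.Ioo 0 μ, Complex.ofReal (φ r) * pairing L (Aop L (u r)) v)
          + (∫ r in Set.Ioo 0 μ, Complex.ofReal (φ r) * pairing L (Bop L (ψ r) (u r)) v)
        = ∫ r in Set.Ioo 0 μ, Complex.ofReal (φ r) * pairing L f v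

/-- `u` is a weak solution on `[-μ,T]` of the delayed 3D Navier-Stokes system
`du + (ν A u(t) + B(u(t-μ),u(t))) dt = f dt`, `u(0) = u₀`, `u = φ₀` on `[-μ,0)`. -/
def IsDelaySol (L ν μ α T : ℝ) (f : Coeff) (φ0 : ℝ → Coeff) (u0 : Coeff) (u : ℝ → Coeff) :
    Prop :=
  MemL2V L (-μ) T (1 + α) u ∧ u 0 = u0 ∧ (∀ t, -μ ≤ t → t < 0 → u t = φ0 t) ∧
    ∀ v : Coeff, MemV L (α + 1) v → ∀ φ : ℝ → ℝ, TestOn 0 T φ →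
      (-(∫ r in Set.Ioo 0 T, Complex.ofReal (deriv φ r) * pairing L (u r) v))
          + (ν : ℂ) * (∫ r in Set.Ioo 0 T, Complex.ofReal (φ r) * pairing L (Aop L (u r)) v)
          + (∫ r in Set.Ioo 0 T, Complex.ofReal (φ r) * pairing L (Bop L (u (r - μ)) (u r)) v)
        = ∫ r in Set.Ioo 0 T, Complex.ofReal (φ r) * pairing L f v

/-- Elements of the phase spaces `X^μ_α = L₂(0,μ,V^{1+α}) × V^α` and
`Y^μ_α = L₂(-μ,0,V^{1+α}) × V^α`: a path together with a field. -/
abbrev PP : Type := (ℝ → Coeff) × Coeff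

/-- The distance of the product space `L₂(a,b,V^{1+α}) × V^α`. -/
def distP (L α a b : ℝ) (p q : PP) : ℝ :=
  Real.sqrt ((∫ t in Set.Ioo a b, normVsq L (1 + α) (p.1 t - q.1 t)) + normVsq L α (p.2 - q.2))

/-- Membership in the closed ball `B_{L₂(a,b,V^{1+α})}(0,R) × B_{V^α}(0,ρ)`. -/
def InBall (L α a b R ρ : ℝ) (p : PP) : Prop :=
  MemL2V L a b (1 + α) p.1 ∧ MemV L α p.2 ∧
    (∫ t in Set.Ioo a b, normVsq L (1 + α) (p.1 t)) ≤ R ^ 2 ∧ normV L α p.2 ≤ ρ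

/-- `c` is a constant for the trilinear estimate with exponents `(s₁,s₂,s₃)`:
`|b(u,v,w)| ≤ c ‖u‖_{s₁} ‖v‖_{s₂+1} ‖w‖_{s₃}`. -/
def TriBound (L s1 s2 s3 c : ℝ) : Prop :=
  ∀ u v w : Coeff, MemV L s1 u → MemV L (s2 + 1) v → MemV L s3 w →
    ‖btri L u v w‖ ≤ c * normV L s1 u * normV L (s2 + 1) v * normV L s3 w

/-- Condition `-νλμ/2 + c²R²/ν < -ln 2`. -/
def Cond1 (L ν μ c R : ℝ) : Prop :=
  -(ν * lam L * μ) / 2 + c ^ 2 * R ^ 2 / ν < -Real.log 2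

/-- The smallness condition
`(8/(ν²λ))‖f‖²_{α-1} e^{νλμ/2}(2/ν + (2c²R²/ν²)(e^{c²R²/ν} + 1/2) + λμe^{-νλμ/2}/2) ≤ R²/2`. -/
def Cond2 (L ν μ α c R : ℝ) (f : Coeff) : Prop :=
  8 / (ν ^ 2 * lam L) * normVsq L (α - 1) f * Real.exp (ν * lam L * μ / 2) *
      (2 / ν + 2 * c ^ 2 * R ^ 2 / ν ^ 2 * (Real.exp (c ^ 2 * R ^ 2 / ν) + 1 / 2)
        + lam L * μ * Real.exp (-(ν * lam L * μ) / 2) / 2)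
    ≤ R ^ 2 / 2

/-- `ρ² = (8/(ν²λ)) ‖f‖²_{α-1} e^{νλμ/2}`. -/
def RhoEq (L ν μ α ρ : ℝ) (f : Coeff) : Prop :=
  ρ ^ 2 = 8 / (ν ^ 2 * lam L) * normVsq L (α - 1) f * Real.exp (ν * lam L * μ / 2)

/-- `U` is the one-step solution map `U(ψ,u₀) = (u, u(μ))` of the linearized system, where
`u` is the (unique, continuous) weak solution with drift `ψ` and initial value `u₀`. -/
def IsUmap (L ν μ α : ℝ) (f : Coeff) (U : PP → PP) : Prop :=
  ∀ p : PP, MemL2V L 0 μ (1 + α) p.1 → MemV L α p.2 →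
    ∃ u : ℝ → Coeff, IsLinSol L ν μ α f p.1 p.2 u ∧ ContOnV L 0 μ α u ∧ U p = (u, u μ)

/-- `S` is the solution semiflow `S(t)(φ,u₀) = ((u^μ)_t, u^μ(t))` of the delayed system,
where `u^μ` is the (unique, continuous) weak solution with history `φ` and initial value
`u₀`, and `(u^μ)_t(s) = u^μ(t+s)`. -/
def IsSmap (L ν μ α : ℝ) (f : Coeff) (S : ℝ → PP → PP) : Prop :=
  ∀ p : PP, MemL2V L (-μ) 0 (1 + α) p.1 → MemV L α p.2 →
    ∃ u : ℝ → Coeff, (∀ T, 0 < T → IsDelaySol L ν μ α T f p.1 p.2 u) ∧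
      (∀ T, 0 < T → ContOnV L 0 T α u) ∧
      ∀ t, 0 ≤ t → S t p = (fun s => u (t + s), u t)

/-- Sequential compactness of a set with respect to the pseudometric `distP`. -/
def SeqCompactP (L α a b : ℝ) (A : Set PP) : Prop :=
  ∀ x : ℕ → PP, (∀ n, x n ∈ A) →
    ∃ φ : ℕ → ℕ, StrictMono φ ∧ ∃ p ∈ A,
      Tendsto (fun n => distP L α a b (x (φ n)) p) atTop (nhds 0)

/-- `A ⊆ B` up to the identification given by the pseudometric `distP`. -/
def SubsetP (L α a b : ℝ) (A B : Set PP) : Prop :=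
  ∀ p ∈ A, ∃ q ∈ B, distP L α a b p q = 0

/-- `A = B` up to the identification given by the pseudometric `distP`. -/
def SetEqP (L α a b : ℝ) (A B : Set PP) : Prop :=
  SubsetP L α a b A B ∧ SubsetP L α a b B A

/-- `p` lies in the `distP`-closure of `A`. -/
def InClosureP (L α a b : ℝ) (A : Set PP) (p : PP) : Prop :=
  ∀ ε > 0, ∃ q ∈ A, distP L α a b p q < ε

/-!
Taking absolute values in Fourier variables bounds `|b(u,v,w)|` by a multiple of the
convolution sum `∑_{k+m+n=0} U(k) V(m) W(n)` of the amplitudes `U = |û|`, `V = |m| |v̂|`,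
`W = |ŵ|`, while `‖x‖_s` is, up to a power of `2π/L`, the `ℓ²` norm of `|k|^s |x̂(k)|`.
Split `ℤ³` into dyadic shells `2^p ≤ |k| < 2^(p+1)`. By the triangle inequality the shells
`p, q, r` met by a nonzero term have their two largest indices within one of each other, and
Young's inequality with the `ℓ¹` norm on the smallest shell, which has `O(2^(3p))` points,
bounds the contribution of `(p, q, r)` by `2^(3 min(p,q,r)/2)` times the `ℓ²` norms of the
three pieces. What is left is the sum over `ℕ³` of `2^(3 min/2 - s₁p - s₂q - s₃r) a_p b_q c_r`.
Where `p` is the smallest index and `q ≈ r`, the weight is comparable to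
`2^(-(s₁+s₂+s₃-3/2)p) 2^(-(s₂+s₃)(q-p))`: the hypotheses make both factors non-increasing and
one of them geometrically decaying, so the sum over `p ≤ q` is bounded, and Cauchy–Schwarz
in the adjacent pair `(q, r)` finishes the estimate.
-/

open ENNReal

section SequenceSpace

variable {ι κ : Type*}

def l2norm (f : ι → ℝ≥0∞) : ℝ≥0∞ := (∑' i, f i ^ (2 : ℝ)) ^ (1 / 2 : ℝ)

theorem tsum_mul_le_l2norm_mul (f g : ι → ℝ≥0∞) : ∑' i, f i * g i ≤ l2norm f * l2norm g := by
  let _ : MeasurableSpace ι := ⊤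
  simpa [lintegral_count', measurable_from_top, l2norm] using
    ENNReal.lintegral_mul_le_Lp_mul_Lq Measure.count Real.HolderConjugate.two_two
      (measurable_from_top (f := f)).aemeasurable (measurable_from_top (f := g)).aemeasurable

theorem le_l2norm (f : ι → ℝ≥0∞) (i : ι) : f i ≤ l2norm f := by
  have h := ENNReal.rpow_le_rpow (ENNReal.le_tsum (f := fun j => f j ^ (2 : ℝ)) i)
    (by norm_num : (0 : ℝ) ≤ 1 / 2)
  rwa [← ENNReal.rpow_mul, show (2 : ℝ) * (1 / 2) = 1 by norm_num, ENNReal.rpow_one] at h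

theorem l2norm_rpow_two (f : ι → ℝ≥0∞) : l2norm f ^ (2 : ℝ) = ∑' i, f i ^ (2 : ℝ) := by
  rw [l2norm, ← ENNReal.rpow_mul]; norm_num

theorem l2norm_le_of_tsum_le {f : ι → ℝ≥0∞} {g : κ → ℝ≥0∞} {M : ℝ≥0∞}
    (h : ∑' i, f i ^ (2 : ℝ) ≤ M * ∑' j, g j ^ (2 : ℝ)) :
    l2norm f ≤ M ^ (1 / 2 : ℝ) * l2norm g := by
  rw [l2norm, l2norm, ← ENNReal.mul_rpow_of_nonneg _ _ (by norm_num)]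
  exact ENNReal.rpow_le_rpow h (by norm_num)

/-- Schur's test for a `0/1` kernel. -/
theorem tsum_tsum_ite_mul_le (R : ι → κ → Prop) [∀ i j, Decidable (R i j)] {M : ℝ≥0∞}
    (hrow : ∀ i, ∑' j, (if R i j then 1 else 0 : ℝ≥0∞) ≤ M)
    (hcol : ∀ j, ∑' i, (if R i j then 1 else 0 : ℝ≥0∞) ≤ M) (b : ι → ℝ≥0∞) (c : κ → ℝ≥0∞) :
    ∑' i, ∑' j, (if R i j then b i * c j else 0) ≤ M * (l2norm b * l2norm c) := by
  set χ : ι × κ → ℝ≥0∞ := fun x => if R x.1 x.2 then 1 else 0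
  have hχ : ∀ x, χ x ^ (2 : ℝ) = χ x := fun x => by
    simp only [χ]; split_ifs <;> simp
  have hb : l2norm (fun x => χ x * b x.1) ≤ M ^ (1 / 2 : ℝ) * l2norm b := by
    refine l2norm_le_of_tsum_le ?_
    simp only [ENNReal.mul_rpow_of_nonneg _ _ (by norm_num : (0 : ℝ) ≤ 2), hχ]
    rw [ENNReal.tsum_prod', ← ENNReal.tsum_mul_left]
    refine ENNReal.tsum_le_tsum fun i => ?_
    dsimp only
    rw [ENNReal.tsum_mul_right]
    exact mul_le_mul_left (hrow i) _
  have hc : l2norm (fun x => χ x * c x.2) ≤ M ^ (1 / 2 : ℝ) * l2norm c := by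
    refine l2norm_le_of_tsum_le ?_
    simp only [ENNReal.mul_rpow_of_nonneg _ _ (by norm_num : (0 : ℝ) ≤ 2), hχ]
    rw [ENNReal.tsum_prod', ENNReal.tsum_comm, ← ENNReal.tsum_mul_left]
    refine ENNReal.tsum_le_tsum fun j => ?_
    dsimp only
    rw [ENNReal.tsum_mul_right]
    exact mul_le_mul_left (hcol j) _
  calc ∑' i, ∑' j, (if R i j then b i * c j else 0)
      = ∑' x : ι × κ, (χ x * b x.1) * (χ x * c x.2) := by
        rw [ENNReal.tsum_prod']
        refine tsum_congr fun i => tsum_congr fun j => ?_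
        simp only [χ]; split_ifs <;> simp
    _ ≤ l2norm (fun x => χ x * b x.1) * l2norm (fun x => χ x * c x.2) :=
        tsum_mul_le_l2norm_mul _ _
    _ ≤ (M ^ (1 / 2 : ℝ) * l2norm b) * (M ^ (1 / 2 : ℝ) * l2norm c) := mul_le_mul' hb hc
    _ = M * (l2norm b * l2norm c) := by
        rw [mul_mul_mul_comm, ← ENNReal.rpow_add_of_nonneg _ _ (by norm_num) (by norm_num)]
        norm_num

theorem l2norm_comp_equiv (e : ι ≃ κ) (f : κ → ℝ≥0∞) :
    l2norm (fun i => f (e i)) = l2norm f := by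
  rw [l2norm, l2norm, e.tsum_eq (fun j => f j ^ (2 : ℝ))]

theorem tsum_indicator_le_encard_mul_l2norm (s : Set ι) (A : ι → ℝ≥0∞) :
    ∑' i, s.indicator A i ≤ (s.encard : ℝ≥0∞) ^ (1 / 2 : ℝ) * l2norm (s.indicator A) := by
  have h1 : ∀ i, s.indicator A i = s.indicator 1 i * s.indicator A i := fun i => by
    by_cases hi : i ∈ s <;> simp [hi]
  have h2 : ∀ i, (s.indicator 1 i : ℝ≥0∞) ^ (2 : ℝ) = s.indicator 1 i := fun i => by
    by_cases hi : i ∈ s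
    · simp only [Set.indicator_of_mem hi, Pi.one_apply, ENNReal.one_rpow]
    · simp only [Set.indicator_of_notMem hi, ENNReal.zero_rpow_of_pos two_pos]
  calc ∑' i, s.indicator A i = ∑' i, s.indicator 1 i * s.indicator A i := tsum_congr h1
    _ ≤ l2norm (s.indicator 1) * l2norm (s.indicator A) := tsum_mul_le_l2norm_mul _ _
    _ = _ := by
        rw [l2norm, tsum_congr h2, ← tsum_subtype]
        simp only [Pi.one_apply, ENNReal.tsum_set_one]

end SequenceSpace

section Dyadic

theorem sum_range_pow_mul_pow_le_left (x : ℝ≥0∞) {y : ℝ≥0∞} (hy : y ≤ 1) (q : ℕ) :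
    ∑ p ∈ Finset.range (q + 1), x ^ p * y ^ (q - p) ≤ (1 - x)⁻¹ := by
  rw [← ENNReal.tsum_geometric]
  refine le_trans (Finset.sum_le_sum fun p _ => ?_) (ENNReal.sum_le_tsum _)
  exact mul_le_of_le_one_right' (pow_le_one₀ zero_le hy)

theorem sum_range_pow_mul_pow_le_right {x : ℝ≥0∞} (y : ℝ≥0∞) (hx : x ≤ 1) (q : ℕ) :
    ∑ p ∈ Finset.range (q + 1), x ^ p * y ^ (q - p) ≤ (1 - y)⁻¹ := by
  rw [← Finset.sum_range_reflect]
  refine le_trans (le_of_eq (Finset.sum_congr rfl fun p hp => ?_))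
    (sum_range_pow_mul_pow_le_left y hx q)
  have hpq : p ≤ q := Nat.lt_succ_iff.mp (Finset.mem_range.mp hp)
  rw [add_tsub_cancel_right, Nat.sub_sub_self hpq, mul_comm]

/-- `2^(θp - κq) = 2^(-(κ - θ)p) 2^(-κ(q - p))`, so these sums are convolutions of two
geometric sequences with ratio at most `1`, one of them summable. -/
theorem exists_sum_range_two_rpow_le {θ κ : ℝ} (hκ : 0 ≤ κ) (hθκ : θ ≤ κ)
    (hstrict : θ < κ ∨ 0 < κ) :
    ∃ C : ℝ≥0∞, C ≠ ∞ ∧ ∀ q : ℕ,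
      ∑ p ∈ Finset.range (q + 1), (2 : ℝ≥0∞) ^ (θ * p - κ * q) ≤ C := by
  set x : ℝ≥0∞ := 2 ^ (θ - κ)
  set y : ℝ≥0∞ := 2 ^ (-κ)
  have hsplit : ∀ q, ∀ p ∈ Finset.range (q + 1),
      (2 : ℝ≥0∞) ^ (θ * p - κ * q) = x ^ p * y ^ (q - p) := by
    intro q p hp
    have hpq : p ≤ q := Nat.lt_succ_iff.mp (Finset.mem_range.mp hp)
    simp only [x, y, ← ENNReal.rpow_natCast, ← ENNReal.rpow_mul,
      ← ENNReal.rpow_add _ _ two_ne_zero ENNReal.ofNat_ne_top, Nat.cast_sub hpq]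
    ring_nf
  have hx : x ≤ 1 := (ENNReal.rpow_le_rpow_of_exponent_le one_le_two (by linarith :
    θ - κ ≤ 0)).trans_eq ENNReal.rpow_zero
  have hy : y ≤ 1 := (ENNReal.rpow_le_rpow_of_exponent_le one_le_two (by linarith :
    -κ ≤ 0)).trans_eq ENNReal.rpow_zero
  have hne : ∀ {z : ℝ≥0∞}, z < 1 → (1 - z)⁻¹ ≠ ∞ := fun hz =>
    ENNReal.inv_ne_top.mpr (tsub_pos_of_lt hz).ne'
  rcases hstrict with h | h
  · have hx1 : x < 1 := ENNReal.rpow_lt_one_of_one_lt_of_neg one_lt_two (by linarith)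
    exact ⟨_, hne hx1, fun q => (Finset.sum_congr rfl (hsplit q)).trans_le
      (sum_range_pow_mul_pow_le_left x hy q)⟩
  · have hy1 : y < 1 := ENNReal.rpow_lt_one_of_one_lt_of_neg one_lt_two (by linarith)
    exact ⟨_, hne hy1, fun q => (Finset.sum_congr rfl (hsplit q)).trans_le
      (sum_range_pow_mul_pow_le_right y hx q)⟩

theorem tsum_ite_le_mul_l2norm {w : ℕ → ℝ≥0∞} {q : ℕ} {G : ℝ≥0∞}
    (hG : ∑ p ∈ Finset.range (q + 1), w p ≤ G) (a : ℕ → ℝ≥0∞) :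
    ∑' p, (if p ≤ q then w p * a p else 0) ≤ G * l2norm a := by
  rw [tsum_eq_sum (s := Finset.range (q + 1)) fun p hp =>
    if_neg fun h => hp (Finset.mem_range.mpr (Nat.lt_succ_of_le h))]
  calc ∑ p ∈ Finset.range (q + 1), (if p ≤ q then w p * a p else 0)
      ≤ ∑ p ∈ Finset.range (q + 1), w p * l2norm a := Finset.sum_le_sum fun p hp => by
        rw [if_pos (Nat.lt_succ_iff.mp (Finset.mem_range.mp hp))]
        exact mul_le_mul_right (le_l2norm a p) _
    _ ≤ G * l2norm a := by rw [← Finset.sum_mul]; exact mul_le_mul_left hG _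

theorem tsum_ite_band_le (q : ℕ) :
    ∑' r : ℕ, (if q ≤ r + 1 ∧ r ≤ q + 1 then 1 else 0 : ℝ≥0∞) ≤ 3 := by
  rw [tsum_eq_sum (s := Finset.Icc (q - 1) (q + 1)) fun r hr => if_neg fun h =>
    hr (Finset.mem_Icc.mpr ⟨by omega, h.2⟩)]
  calc ∑ r ∈ Finset.Icc (q - 1) (q + 1), (if q ≤ r + 1 ∧ r ≤ q + 1 then 1 else 0 : ℝ≥0∞)
      ≤ ∑ r ∈ Finset.Icc (q - 1) (q + 1), 1 := Finset.sum_le_sum fun r _ => by split_ifs <;> simp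
    _ ≤ 3 := by
        rw [Finset.sum_const, Nat.card_Icc, nsmul_one]
        exact_mod_cast (by omega : q + 1 + 1 - (q - 1) ≤ 3)

def cornerWeight (θ t u : ℝ) (x y z : ℕ) : ℝ≥0∞ :=
  if x ≤ y ∧ y ≤ z + 1 ∧ z ≤ y + 1 then 2 ^ (θ * x - t * y - u * z) else 0

theorem cornerWeight_le (θ t u : ℝ) (x y z : ℕ) :
    cornerWeight θ t u x y z ≤ 2 ^ |u| * ((if x ≤ y then 2 ^ (θ * x - (t + u) * y) else 0) *
      (if y ≤ z + 1 ∧ z ≤ y + 1 then 1 else 0)) := by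
  unfold cornerWeight
  by_cases h : x ≤ y ∧ y ≤ z + 1 ∧ z ≤ y + 1
  swap
  · rw [if_neg h]; exact zero_le
  rw [if_pos h, if_pos h.1, if_pos h.2, mul_one,
    ← ENNReal.rpow_add _ _ two_ne_zero ENNReal.ofNat_ne_top]
  refine ENNReal.rpow_le_rpow_of_exponent_le one_le_two ?_
  have hyz : (y : ℝ) ≤ z + 1 := by exact_mod_cast h.2.1
  have hzy : (z : ℝ) ≤ y + 1 := by exact_mod_cast h.2.2
  cases abs_cases u <;> nlinarith

theorem exists_tsum_cornerWeight_le {θ t u : ℝ} (hκ : 0 ≤ t + u) (hθκ : θ ≤ t + u)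
    (hstrict : θ < t + u ∨ 0 < t + u) :
    ∃ C : ℝ≥0∞, C ≠ ∞ ∧ ∀ a b c : ℕ → ℝ≥0∞,
      ∑' p, ∑' q, ∑' r, cornerWeight θ t u p q r * (a p * (b q * c r))
        ≤ C * (l2norm a * (l2norm b * l2norm c)) := by
  obtain ⟨G, hG, hGq⟩ := exists_sum_range_two_rpow_le hκ hθκ hstrict
  refine ⟨2 ^ |u| * G * 3, by finiteness, fun a b c => ?_⟩
  set X : ℕ → ℕ → ℝ≥0∞ := fun p q => if p ≤ q then 2 ^ (θ * p - (t + u) * q) * a p else 0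
  set Y : ℕ → ℕ → ℝ≥0∞ := fun q r => if q ≤ r + 1 ∧ r ≤ q + 1 then b q * c r else 0
  have hpt : ∀ p q r, cornerWeight θ t u p q r * (a p * (b q * c r)) ≤
      2 ^ |u| * (X p q * Y q r) := fun p q r => by
    refine (mul_le_mul_left (cornerWeight_le θ t u p q r) _).trans (le_of_eq ?_)
    simp only [X, Y]
    split_ifs <;> ring
  have hY : ∑' q, ∑' r, Y q r ≤ 3 * (l2norm b * l2norm c) :=
    tsum_tsum_ite_mul_le _ tsum_ite_band_le
      (fun r => by simpa only [and_comm] using tsum_ite_band_le r) b c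
  calc ∑' p, ∑' q, ∑' r, cornerWeight θ t u p q r * (a p * (b q * c r))
      ≤ ∑' p, ∑' q, ∑' r, 2 ^ |u| * (X p q * Y q r) :=
        ENNReal.tsum_le_tsum fun p => ENNReal.tsum_le_tsum fun q =>
          ENNReal.tsum_le_tsum fun r => hpt p q r
    _ = 2 ^ |u| * ∑' q, (∑' p, X p q) * ∑' r, Y q r := by
        simp only [ENNReal.tsum_mul_left]
        rw [ENNReal.tsum_comm]
        simp only [ENNReal.tsum_mul_right]
    _ ≤ 2 ^ |u| * ∑' q, (G * l2norm a) * ∑' r, Y q r := by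
        gcongr with q
        exact tsum_ite_le_mul_l2norm (hGq q) a
    _ ≤ 2 ^ |u| * ((G * l2norm a) * (3 * (l2norm b * l2norm c))) := by
        rw [ENNReal.tsum_mul_left]
        gcongr
    _ = 2 ^ |u| * G * 3 * (l2norm a * (l2norm b * l2norm c)) := by ring

/-- The dyadic shadow of the triangle inequality for `k + m + n = 0`. -/
def ShellTriangle (p q r : ℕ) : Prop :=
  p ≤ max q r + 1 ∧ q ≤ max p r + 1 ∧ r ≤ max p q + 1

instance (p q r : ℕ) : Decidable (ShellTriangle p q r) := by
  unfold ShellTriangle; infer_instance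

def AdmissibleExponents (s1 s2 s3 : ℝ) : Prop :=
  (0 ≤ s1 + s2 ∧ 0 ≤ s1 + s3 ∧ 0 ≤ s2 + s3 ∧ 3 / 2 < s1 + s2 + s3) ∨
    (0 < s1 + s2 ∧ 0 < s1 + s3 ∧ 0 < s2 + s3 ∧ 3 / 2 ≤ s1 + s2 + s3)

namespace AdmissibleExponents

variable {s1 s2 s3 : ℝ}

theorem swap12 (h : AdmissibleExponents s1 s2 s3) : AdmissibleExponents s2 s1 s3 := by
  rcases h with ⟨h1, h2, h3, h4⟩ | ⟨h1, h2, h3, h4⟩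
  · exact Or.inl ⟨by linarith, h3, h2, by linarith⟩
  · exact Or.inr ⟨by linarith, h3, h2, by linarith⟩

theorem rotate (h : AdmissibleExponents s1 s2 s3) : AdmissibleExponents s3 s1 s2 := by
  rcases h with ⟨h1, h2, h3, h4⟩ | ⟨h1, h2, h3, h4⟩
  · exact Or.inl ⟨by linarith, by linarith, h1, by linarith⟩
  · exact Or.inr ⟨by linarith, by linarith, h1, by linarith⟩

theorem exists_tsum_cornerWeight_le (h : AdmissibleExponents s1 s2 s3) :
    ∃ C : ℝ≥0∞, C ≠ ∞ ∧ ∀ a b c : ℕ → ℝ≥0∞,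
      ∑' p, ∑' q, ∑' r, cornerWeight (3 / 2 - s1) s2 s3 p q r * (a p * (b q * c r))
        ≤ C * (l2norm a * (l2norm b * l2norm c)) := by
  rcases h with ⟨-, -, h3, h4⟩ | ⟨-, -, h3, h4⟩
  · exact NS3D.exists_tsum_cornerWeight_le h3 (by linarith) (Or.inl (by linarith))
  · exact NS3D.exists_tsum_cornerWeight_le h3.le (by linarith) (Or.inr h3)

end AdmissibleExponents

def dyadicWeight (s1 s2 s3 : ℝ) (p q r : ℕ) : ℝ≥0∞ :=
  if ShellTriangle p q r then
    2 ^ (3 / 2 * ((min p (min q r) : ℕ) : ℝ) - (s1 * p + s2 * q + s3 * r))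
  else 0

theorem dyadicWeight_le_cornerWeight (s1 s2 s3 : ℝ) (p q r : ℕ) :
    dyadicWeight s1 s2 s3 p q r ≤
      cornerWeight (3 / 2 - s1) s2 s3 p q r + cornerWeight (3 / 2 - s2) s1 s3 q p r +
        cornerWeight (3 / 2 - s3) s1 s2 r p q := by
  unfold dyadicWeight cornerWeight
  by_cases h : ShellTriangle p q r
  swap
  · rw [if_neg h]; exact zero_le
  rw [if_pos h]
  obtain ⟨hp, hq, hr⟩ := h
  by_cases hpq : p ≤ q ∧ p ≤ r
  · rw [if_pos (by omega), min_eq_left (by omega)]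
    refine le_trans (le_of_eq ?_) (le_self_add.trans le_self_add)
    congr 1; ring
  by_cases hqr : q ≤ r
  · rw [if_pos (show q ≤ p ∧ p ≤ r + 1 ∧ r ≤ p + 1 by omega),
      min_eq_right (show min q r ≤ p by omega), min_eq_left hqr]
    refine le_trans (le_of_eq ?_) (le_add_self.trans le_self_add)
    congr 1; ring
  · rw [if_pos (show r ≤ p ∧ p ≤ q + 1 ∧ q ≤ p + 1 by omega),
      min_eq_right (show min q r ≤ p by omega), min_eq_right (by omega : r ≤ q)]
    refine le_trans (le_of_eq ?_) le_add_self
    congr 1; ring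

theorem AdmissibleExponents.exists_tsum_dyadicWeight_le {s1 s2 s3 : ℝ}
    (h : AdmissibleExponents s1 s2 s3) :
    ∃ C : ℝ≥0∞, C ≠ ∞ ∧ ∀ a b c : ℕ → ℝ≥0∞,
      ∑' p, ∑' q, ∑' r, dyadicWeight s1 s2 s3 p q r * (a p * (b q * c r)) ≤
        C * (l2norm a * (l2norm b * l2norm c)) := by
  obtain ⟨C₁, hC₁, h₁⟩ := h.exists_tsum_cornerWeight_le
  obtain ⟨C₂, hC₂, h₂⟩ := h.swap12.exists_tsum_cornerWeight_le
  obtain ⟨C₃, hC₃, h₃⟩ := h.rotate.exists_tsum_cornerWeight_le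
  refine ⟨C₁ + C₂ + C₃, by finiteness, fun a b c => ?_⟩
  have b₂ : ∑' p, ∑' q, ∑' r, cornerWeight (3 / 2 - s2) s1 s3 q p r * (a p * (b q * c r)) ≤
      C₂ * (l2norm a * (l2norm b * l2norm c)) := by
    refine le_of_eq_of_le ?_ ((h₂ b a c).trans_eq (by ring))
    rw [ENNReal.tsum_comm]
    exact tsum_congr fun q => tsum_congr fun p => tsum_congr fun r => by ring
  have b₃ : ∑' p, ∑' q, ∑' r, cornerWeight (3 / 2 - s3) s1 s2 r p q * (a p * (b q * c r)) ≤
      C₃ * (l2norm a * (l2norm b * l2norm c)) := by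
    refine le_of_eq_of_le ?_ ((h₃ c a b).trans_eq (by ring))
    rw [tsum_congr fun p => ENNReal.tsum_comm, ENNReal.tsum_comm]
    exact tsum_congr fun r => tsum_congr fun p => tsum_congr fun q => by ring
  refine (ENNReal.tsum_le_tsum fun p => ENNReal.tsum_le_tsum fun q => ENNReal.tsum_le_tsum
    fun r => mul_le_mul_left (dyadicWeight_le_cornerWeight s1 s2 s3 p q r) _).trans ?_
  simp only [add_mul, ENNReal.tsum_add]
  calc _ ≤ C₁ * (l2norm a * (l2norm b * l2norm c)) + C₂ * (l2norm a * (l2norm b * l2norm c)) +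
        C₃ * (l2norm a * (l2norm b * l2norm c)) := add_le_add (add_le_add (h₁ a b c) b₂) b₃
    _ = _ := by ring

end Dyadic

section Convolution

variable {G : Type*} [AddCommGroup G]

def conv3 (A B C : G → ℝ≥0∞) : ℝ≥0∞ := ∑' k, ∑' m, A k * (B m * C (-(k + m)))

theorem conv3_comm12 (A B C : G → ℝ≥0∞) : conv3 A B C = conv3 B A C := by
  rw [conv3, ENNReal.tsum_comm]
  exact tsum_congr fun m => tsum_congr fun k => by rw [add_comm k m]; ring

theorem conv3_comm13 (A B C : G → ℝ≥0∞) : conv3 A B C = conv3 C B A := by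
  rw [conv3, conv3, ENNReal.tsum_comm, ENNReal.tsum_comm (f := fun n m => C n * _)]
  refine tsum_congr fun m => ?_
  rw [← (Equiv.neg G |>.trans (Equiv.addRight (-m))).tsum_eq]
  refine tsum_congr fun k => ?_
  simp only [Equiv.trans_apply, Equiv.neg_apply, Equiv.coe_addRight]
  rw [show -(-k + -m + m) = k by abel, show -k + -m = -(k + m) by abel]
  ring

theorem conv3_le_tsum_mul_l2norm_mul (A B C : G → ℝ≥0∞) :
    conv3 A B C ≤ (∑' k, A k) * (l2norm B * l2norm C) := by
  rw [conv3, ← ENNReal.tsum_mul_right]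
  refine ENNReal.tsum_le_tsum fun k => ?_
  rw [ENNReal.tsum_mul_left]
  refine mul_le_mul_right ((tsum_mul_le_l2norm_mul _ _).trans_eq ?_) _
  congr 1
  exact l2norm_comp_equiv ((Equiv.addLeft k).trans (Equiv.neg G)) C

theorem conv3_mono {A A' B B' C C' : G → ℝ≥0∞} (hA : A ≤ A') (hB : B ≤ B') (hC : C ≤ C') :
    conv3 A B C ≤ conv3 A' B' C' :=
  ENNReal.tsum_le_tsum fun k => ENNReal.tsum_le_tsum fun m =>
    mul_le_mul' (hA k) (mul_le_mul' (hB m) (hC _))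

theorem conv3_tsum {ι : Type*} (f g h : ι → G → ℝ≥0∞) :
    conv3 (fun k => ∑' p, f p k) (fun m => ∑' q, g q m) (fun n => ∑' r, h r n) =
      ∑' p, ∑' q, ∑' r, conv3 (f p) (g q) (h r) := by
  have swap : ∀ F : G → G → ι → ℝ≥0∞,
      ∑' k, ∑' m, ∑' p, F k m p = ∑' p, ∑' k, ∑' m, F k m p := fun F => by
    rw [tsum_congr fun k => ENNReal.tsum_comm, ENNReal.tsum_comm]
  simp_rw [conv3, ← ENNReal.tsum_mul_right]
  simp_rw [← ENNReal.tsum_mul_left]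
  rw [swap]
  refine tsum_congr fun p => ?_
  rw [swap]
  refine tsum_congr fun q => ?_
  rw [swap]

theorem conv3_const_mul (x y z : ℝ≥0∞) (A B C : G → ℝ≥0∞) :
    conv3 (fun k => x * A k) (fun m => y * B m) (fun n => z * C n) = x * y * z * conv3 A B C := by
  simp only [conv3, ← ENNReal.tsum_mul_left]
  exact tsum_congr fun k => tsum_congr fun m => by ring

end Convolution

section Lattice

def latticeVec : K3 →+ EuclideanSpace ℝ (Fin 3) where
  toFun k := WithLp.toLp 2 fun i => (k i : ℝ)
  map_zero' := by ext; simp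
  map_add' k m := by ext; simp

@[simp]
theorem latticeVec_apply (k : K3) (i : Fin 3) : latticeVec k i = k i := rfl

theorem norm_latticeVec_le_add {k m n : K3} (h : k + m + n = 0) :
    ‖latticeVec k‖ ≤ ‖latticeVec m‖ + ‖latticeVec n‖ := by
  rw [show k = -(m + n) by rw [← sub_eq_zero, ← h]; abel, map_neg, map_add, norm_neg]
  exact norm_add_le _ _

theorem one_le_norm_latticeVec {k : K3} (hk : k ≠ 0) : 1 ≤ ‖latticeVec k‖ := by
  obtain ⟨i, hi⟩ := Function.ne_iff.mp hk
  calc (1 : ℝ) ≤ |(k i : ℝ)| := by exact_mod_cast Int.one_le_abs hi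
    _ = ‖latticeVec k i‖ := (Real.norm_eq_abs _).symm
    _ ≤ ‖latticeVec k‖ := PiLp.norm_apply_le _ _

/-- The dyadic shell of `k`: `2 ^ shell k ≤ |k| < 2 ^ (shell k + 1)` for `k ≠ 0`. -/
def shell (k : K3) : ℕ := Nat.log 2 ⌊‖latticeVec k‖⌋₊

theorem two_pow_shell_le {k : K3} (hk : k ≠ 0) : (2 : ℝ) ^ shell k ≤ ‖latticeVec k‖ := by
  have h0 : ⌊‖latticeVec k‖⌋₊ ≠ 0 := (Nat.floor_pos.mpr (one_le_norm_latticeVec hk)).ne'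
  calc (2 : ℝ) ^ shell k = ((2 ^ shell k : ℕ) : ℝ) := by push_cast; rfl
    _ ≤ ⌊‖latticeVec k‖⌋₊ := by exact_mod_cast Nat.pow_log_le_self 2 h0
    _ ≤ ‖latticeVec k‖ := Nat.floor_le (norm_nonneg _)

theorem norm_lt_two_pow_shell (k : K3) : ‖latticeVec k‖ < 2 ^ (shell k + 1) := by
  calc ‖latticeVec k‖ < ⌊‖latticeVec k‖⌋₊ + 1 := Nat.lt_floor_add_one _
    _ ≤ ((2 ^ (shell k + 1) : ℕ) : ℝ) := by
        exact_mod_cast Nat.lt_pow_succ_log_self one_lt_two _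
    _ = 2 ^ (shell k + 1) := by push_cast; rfl

theorem shell_le_max_add_one {k m n : K3} (h : k + m + n = 0) :
    shell k ≤ max (shell m) (shell n) + 1 := by
  rcases eq_or_ne k 0 with rfl | hk
  · simp [shell]
  have hlt : (2 : ℝ) ^ shell k < 2 ^ (max (shell m) (shell n) + 2) :=
    calc (2 : ℝ) ^ shell k ≤ ‖latticeVec k‖ := two_pow_shell_le hk
      _ ≤ ‖latticeVec m‖ + ‖latticeVec n‖ := norm_latticeVec_le_add h
      _ < 2 ^ (shell m + 1) + 2 ^ (shell n + 1) :=
          add_lt_add (norm_lt_two_pow_shell m) (norm_lt_two_pow_shell n)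
      _ ≤ 2 ^ (max (shell m) (shell n) + 1) + 2 ^ (max (shell m) (shell n) + 1) := by
          gcongr <;> first | exact one_le_two | simp
      _ = 2 ^ (max (shell m) (shell n) + 2) := by ring
  have := (pow_lt_pow_iff_right₀ (one_lt_two : (1 : ℝ) < 2)).mp hlt
  omega

theorem shellTriangle_shell (k m : K3) : ShellTriangle (shell k) (shell m) (shell (-(k + m))) :=
  ⟨shell_le_max_add_one (by abel), shell_le_max_add_one (by abel),
    shell_le_max_add_one (by abel)⟩

theorem encard_shell_le (p : ℕ) :
    ({k : K3 | shell k = p}.encard : ℝ≥0∞) ≤ 2 ^ (3 * (p : ℝ) + 9) := by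
  set N : ℤ := 2 ^ (p + 1)
  have hsub : {k : K3 | shell k = p} ⊆ ↑(Fintype.piFinset fun _ : Fin 3 => Finset.Icc (-N) N) := by
    intro k hk
    simp only [Finset.mem_coe, Fintype.mem_piFinset, Finset.mem_Icc, ← abs_le]
    intro i
    have h := (PiLp.norm_apply_le (latticeVec k) i).trans_lt (norm_lt_two_pow_shell k)
    rw [show shell k = p from hk] at h
    have : |(k i : ℝ)| < (N : ℝ) := by simpa [N, Real.norm_eq_abs] using h
    exact_mod_cast this.le
  have hcard : (Fintype.piFinset fun _ : Fin 3 => Finset.Icc (-N) N).card ≤ 2 ^ (3 * p + 9) := by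
    rw [Fintype.card_piFinset, Finset.prod_const, Finset.card_univ, Fintype.card_fin,
      Int.card_Icc, show N + 1 - -N = ((2 ^ (p + 2) + 1 : ℕ) : ℤ) by push_cast [N]; ring,
      Int.toNat_natCast]
    calc (2 ^ (p + 2) + 1) ^ 3 ≤ (2 ^ (p + 3)) ^ 3 := by
          gcongr
          rw [pow_succ 2 (p + 2)]
          linarith [Nat.one_le_two_pow (n := p + 2)]
      _ = 2 ^ (3 * p + 9) := by ring
  calc ({k : K3 | shell k = p}.encard : ℝ≥0∞)
      ≤ ((Fintype.piFinset fun _ : Fin 3 => Finset.Icc (-N) N).card : ℝ≥0∞) := by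
        rw [← ENat.toENNReal_coe, ← Set.encard_coe_eq_coe_finsetCard]
        exact ENat.toENNReal_le.mpr (Set.encard_le_encard hsub)
    _ ≤ ((2 ^ (3 * p + 9) : ℕ) : ℝ≥0∞) := by exact_mod_cast hcard
    _ = 2 ^ (3 * (p : ℝ) + 9) := by
        rw [show 3 * (p : ℝ) + 9 = ((3 * p + 9 : ℕ) : ℝ) by push_cast; ring,
          ENNReal.rpow_natCast]
        norm_cast

theorem rpow_neg_le_two_rpow {x : ℝ} {d : ℕ} (h₁ : 2 ^ d ≤ x) (h₂ : x ≤ 2 ^ (d + 1))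
    (s : ℝ) : x ^ (-s) ≤ 2 ^ (|s| - s * d) := by
  rcases le_total 0 s with hs | hs
  · calc x ^ (-s) ≤ ((2 : ℝ) ^ d) ^ (-s) :=
          Real.rpow_le_rpow_of_nonpos (by positivity) h₁ (by linarith)
      _ = 2 ^ (-s * d) := by rw [← Real.rpow_natCast, ← Real.rpow_mul zero_le_two]; ring_nf
      _ ≤ 2 ^ (|s| - s * d) := Real.rpow_le_rpow_of_exponent_le one_le_two (by
          rw [abs_of_nonneg hs]; linarith)
  · calc x ^ (-s) ≤ ((2 : ℝ) ^ (d + 1)) ^ (-s) :=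
          Real.rpow_le_rpow ((pow_pos two_pos d).le.trans h₁) h₂ (by linarith)
      _ = 2 ^ (|s| - s * d) := by
          rw [abs_of_nonpos hs, ← Real.rpow_natCast, ← Real.rpow_mul zero_le_two]
          push_cast; ring_nf

theorem enorm_latticeVec_rpow_neg_le {k : K3} (hk : k ≠ 0) (s : ℝ) :
    ‖latticeVec k‖ₑ ^ (-s) ≤ 2 ^ (|s| - s * shell k) := by
  have hpos : 0 < ‖latticeVec k‖ := one_pos.trans_le (one_le_norm_latticeVec hk)
  calc ‖latticeVec k‖ₑ ^ (-s) = ENNReal.ofReal (‖latticeVec k‖ ^ (-s)) := by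
        rw [← ofReal_norm, ENNReal.ofReal_rpow_of_pos hpos]
    _ ≤ ENNReal.ofReal (2 ^ (|s| - s * shell k)) := ENNReal.ofReal_le_ofReal
        (rpow_neg_le_two_rpow (two_pow_shell_le hk) (norm_lt_two_pow_shell k).le s)
    _ = 2 ^ (|s| - s * shell k) := by
        rw [← ENNReal.ofReal_rpow_of_pos two_pos, ENNReal.ofReal_ofNat]

end Lattice

section Shells

def shellPart (p : ℕ) (A : K3 → ℝ≥0∞) : K3 → ℝ≥0∞ := {k | shell k = p}.indicator A

theorem tsum_shellPart_le (p : ℕ) (A : K3 → ℝ≥0∞) :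
    ∑' k, shellPart p A k ≤ 2 ^ (9 / 2 : ℝ) * 2 ^ (3 / 2 * (p : ℝ)) * l2norm (shellPart p A) := by
  refine (tsum_indicator_le_encard_mul_l2norm _ A).trans (mul_le_mul_left ?_ _)
  calc ({k : K3 | shell k = p}.encard : ℝ≥0∞) ^ (1 / 2 : ℝ)
      ≤ (2 ^ (3 * (p : ℝ) + 9)) ^ (1 / 2 : ℝ) := by gcongr; exact encard_shell_le p
    _ = 2 ^ (9 / 2 : ℝ) * 2 ^ (3 / 2 * (p : ℝ)) := by
        rw [← ENNReal.rpow_mul, ← ENNReal.rpow_add _ _ two_ne_zero ENNReal.ofNat_ne_top]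
        ring_nf

theorem conv3_shellPart_le_left (p : ℕ) (A B C : K3 → ℝ≥0∞) :
    conv3 (shellPart p A) B C ≤
      2 ^ (9 / 2 : ℝ) * 2 ^ (3 / 2 * (p : ℝ)) * (l2norm (shellPart p A) * (l2norm B * l2norm C)) :=
  (conv3_le_tsum_mul_l2norm_mul _ _ _).trans <|
    (mul_le_mul_left (tsum_shellPart_le p A) _).trans_eq (by ring)

theorem conv3_shellPart_eq_zero {p q r : ℕ} (h : ¬ ShellTriangle p q r) (A B C : K3 → ℝ≥0∞) :
    conv3 (shellPart p A) (shellPart q B) (shellPart r C) = 0 := by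
  refine ENNReal.tsum_eq_zero.mpr fun k => ENNReal.tsum_eq_zero.mpr fun m => ?_
  by_cases hk : shell k = p
  · by_cases hm : shell m = q
    · have hn : shell (-(k + m)) ≠ r := fun hn => h (hk ▸ hm ▸ hn ▸ shellTriangle_shell k m)
      simp only [shellPart, Set.indicator_of_notMem (show -(k + m) ∉ {n | shell n = r} from hn),
        mul_zero]
    · simp [shellPart, Set.indicator_of_notMem (show m ∉ {n | shell n = q} from hm)]
  · simp [shellPart, Set.indicator_of_notMem (show k ∉ {n | shell n = p} from hk)]

/-- Young's inequality with the `ℓ¹` norm on the smallest shell, which has `O(2^(3p))` points. -/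
theorem conv3_shellPart_le (p q r : ℕ) (A B C : K3 → ℝ≥0∞) :
    conv3 (shellPart p A) (shellPart q B) (shellPart r C) ≤
      2 ^ (9 / 2 : ℝ) *
        ((if ShellTriangle p q r then 2 ^ (3 / 2 * ((min p (min q r) : ℕ) : ℝ)) else 0) *
        (l2norm (shellPart p A) * (l2norm (shellPart q B) * l2norm (shellPart r C)))) := by
  by_cases h : ShellTriangle p q r
  swap
  · rw [conv3_shellPart_eq_zero h]; exact zero_le
  rw [if_pos h]
  rcases le_total p (min q r) with hp | hp
  · rw [min_eq_left hp]
    exact (conv3_shellPart_le_left p _ _ _).trans_eq (by ring)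
  rw [min_eq_right hp]
  rcases le_total q r with hq | hq
  · rw [min_eq_left hq, conv3_comm12]
    exact (conv3_shellPart_le_left q _ _ _).trans_eq (by ring)
  · rw [min_eq_right hq, conv3_comm13]
    exact (conv3_shellPart_le_left r _ _ _).trans_eq (by ring)

theorem l2norm_l2norm_shellPart (A : K3 → ℝ≥0∞) :
    l2norm (fun p => l2norm (shellPart p A)) = l2norm A := by
  rw [l2norm, l2norm]
  congr 1
  simp only [l2norm_rpow_two]
  rw [ENNReal.tsum_comm]
  refine tsum_congr fun k => ?_
  rw [tsum_eq_single (shell k) fun p hp => ?_]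
  · simp [shellPart]
  · simp [shellPart, Set.indicator_of_notMem (show k ∉ {n | shell n = p} from Ne.symm hp)]

theorem le_tsum_shellPart (s : ℝ) {U : K3 → ℝ≥0∞} (hU : U 0 = 0) (k : K3) :
    U k ≤ ∑' p : ℕ, 2 ^ (|s| - s * p) * shellPart p (fun k => ‖latticeVec k‖ₑ ^ s * U k) k := by
  rcases eq_or_ne k 0 with rfl | hk
  · rw [hU]; exact zero_le
  rw [tsum_eq_single (shell k) fun p hp => by
      simp [shellPart, Set.indicator_of_notMem (show k ∉ {n | shell n = p} from Ne.symm hp)],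
    shellPart, Set.indicator_of_mem (show k ∈ {n | shell n = shell k} from rfl)]
  have hx0 : ‖latticeVec k‖ₑ ≠ 0 := by
    rw [← ofReal_norm, ENNReal.ofReal_ne_zero_iff]
    exact one_pos.trans_le (one_le_norm_latticeVec hk)
  calc U k = ‖latticeVec k‖ₑ ^ (-s) * (‖latticeVec k‖ₑ ^ s * U k) := by
        rw [← mul_assoc, ← ENNReal.rpow_add _ _ hx0 enorm_ne_top, neg_add_cancel,
          ENNReal.rpow_zero, one_mul]
    _ ≤ 2 ^ (|s| - s * shell k) * (‖latticeVec k‖ₑ ^ s * U k) :=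
        mul_le_mul_left (enorm_latticeVec_rpow_neg_le hk s) _

theorem two_rpow_mul_conv3_shellPart_le (s1 s2 s3 : ℝ) (p q r : ℕ) (A B D : K3 → ℝ≥0∞) :
    2 ^ (|s1| - s1 * p) * 2 ^ (|s2| - s2 * q) * 2 ^ (|s3| - s3 * r) *
      conv3 (shellPart p A) (shellPart q B) (shellPart r D) ≤
        2 ^ (9 / 2 + (|s1| + |s2| + |s3|) : ℝ) * (dyadicWeight s1 s2 s3 p q r *
          (l2norm (shellPart p A) * (l2norm (shellPart q B) * l2norm (shellPart r D)))) := by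
  refine (mul_le_mul_right (conv3_shellPart_le p q r A B D) _).trans_eq ?_
  unfold dyadicWeight
  split_ifs
  · simp only [← mul_assoc, ← ENNReal.rpow_add _ _ two_ne_zero ENNReal.ofNat_ne_top]
    congr 4
    ring
  · simp

theorem AdmissibleExponents.exists_conv3_le {s1 s2 s3 : ℝ} (h : AdmissibleExponents s1 s2 s3) :
    ∃ C : ℝ≥0∞, C ≠ ∞ ∧ ∀ U V W : K3 → ℝ≥0∞, U 0 = 0 → V 0 = 0 → W 0 = 0 →
      conv3 U V W ≤ C * (l2norm (fun k => ‖latticeVec k‖ₑ ^ s1 * U k) *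
        (l2norm (fun k => ‖latticeVec k‖ₑ ^ s2 * V k) *
          l2norm (fun k => ‖latticeVec k‖ₑ ^ s3 * W k))) := by
  obtain ⟨C, hC, hsum⟩ := h.exists_tsum_dyadicWeight_le
  refine ⟨2 ^ (9 / 2 + (|s1| + |s2| + |s3|) : ℝ) * C, by finiteness,
    fun U V W hU hV hW => ?_⟩
  set A := fun k => ‖latticeVec k‖ₑ ^ s1 * U k
  set B := fun k => ‖latticeVec k‖ₑ ^ s2 * V k
  set D := fun k => ‖latticeVec k‖ₑ ^ s3 * W k
  calc conv3 U V W
      ≤ conv3 (fun k => ∑' p : ℕ, 2 ^ (|s1| - s1 * p) * shellPart p A k)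
          (fun m => ∑' q : ℕ, 2 ^ (|s2| - s2 * q) * shellPart q B m)
          (fun n => ∑' r : ℕ, 2 ^ (|s3| - s3 * r) * shellPart r D n) :=
        conv3_mono (le_tsum_shellPart s1 hU) (le_tsum_shellPart s2 hV) (le_tsum_shellPart s3 hW)
    _ ≤ 2 ^ (9 / 2 + (|s1| + |s2| + |s3|) : ℝ) * ∑' p, ∑' q, ∑' r, dyadicWeight s1 s2 s3 p q r *
          (l2norm (shellPart p A) * (l2norm (shellPart q B) * l2norm (shellPart r D))) := by
        rw [conv3_tsum]
        simp only [conv3_const_mul, ← ENNReal.tsum_mul_left]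
        exact ENNReal.tsum_le_tsum fun p => ENNReal.tsum_le_tsum fun q =>
          ENNReal.tsum_le_tsum fun r => two_rpow_mul_conv3_shellPart_le s1 s2 s3 p q r A B D
    _ ≤ 2 ^ (9 / 2 + (|s1| + |s2| + |s3|) : ℝ) * (C * (l2norm A * (l2norm B * l2norm D))) := by
        rw [← l2norm_l2norm_shellPart A, ← l2norm_l2norm_shellPart B,
          ← l2norm_l2norm_shellPart D]
        gcongr
        exact hsum _ _ _
    _ = _ := by ring

end Shells

section Fourier

def coefENorm (x : Coeff) (k : K3) : ℝ≥0∞ := ENNReal.ofReal √(coefNormSq (x k))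

theorem coefNormSq_nonneg (c : Fin 3 → ℂ) : 0 ≤ coefNormSq c :=
  Finset.sum_nonneg fun _ _ => sq_nonneg _

theorem zetaNorm_nonneg (L : ℝ) (k : K3) : 0 ≤ zetaNorm L k := Real.sqrt_nonneg _

theorem normVsq_nonneg (L s : ℝ) (x : Coeff) : 0 ≤ normVsq L s x :=
  tsum_nonneg fun k => mul_nonneg (Real.rpow_nonneg (zetaNorm_nonneg L k) _) (coefNormSq_nonneg _)

theorem normV_nonneg (L s : ℝ) (x : Coeff) : 0 ≤ normV L s x := Real.sqrt_nonneg _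

theorem coefENorm_zero {x : Coeff} (hx : x 0 = 0) : coefENorm x 0 = 0 := by
  simp [coefENorm, coefNormSq, hx]

theorem zetaNorm_eq {L : ℝ} (hL : 0 < L) (k : K3) :
    zetaNorm L k = 2 * Real.pi / L * ‖latticeVec k‖ := by
  rw [zetaNorm, zetaNormSq, EuclideanSpace.norm_eq]
  simp only [zeta, mul_pow, ← Finset.mul_sum, latticeVec_apply, Real.norm_eq_abs, sq_abs]
  rw [Real.sqrt_mul (by positivity), Real.sqrt_sq (by positivity)]

theorem norm_sum_mul_le (a b : Fin 3 → ℂ) :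
    ‖∑ i, a i * b i‖ ≤ √(coefNormSq a) * √(coefNormSq b) :=
  (norm_sum_le _ _).trans <| by
    simpa only [norm_mul, coefNormSq] using
      Real.sum_mul_le_sqrt_mul_sqrt _ (fun i => ‖a i‖) (fun i => ‖b i‖)

theorem norm_btri_summand_le (L : ℝ) (u v w : Coeff) (k m : K3) :
    ‖∑ i, ∑ j, u k j * (Complex.I * (zeta L m j : ℂ)) * v m i * w (-(k + m)) i‖ ≤
      √(coefNormSq (u k)) * zetaNorm L m *
        (√(coefNormSq (v m)) * √(coefNormSq (w (-(k + m))))) := by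
  have hfac : ∑ i, ∑ j, u k j * (Complex.I * (zeta L m j : ℂ)) * v m i * w (-(k + m)) i =
      Complex.I * ((∑ j, u k j * (zeta L m j : ℂ)) * ∑ i, v m i * w (-(k + m)) i) := by
    rw [Finset.sum_mul_sum, Finset.sum_comm, Finset.mul_sum]
    refine Finset.sum_congr rfl fun i _ => ?_
    rw [Finset.mul_sum]
    exact Finset.sum_congr rfl fun j _ => by ring
  have hζ : coefNormSq (fun j => (zeta L m j : ℂ)) = zetaNormSq L m := by
    simp [coefNormSq, zetaNormSq, Complex.norm_real, sq_abs]
  rw [hfac, norm_mul, Complex.norm_I, one_mul, norm_mul]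
  refine mul_le_mul ((norm_sum_mul_le _ _).trans_eq ?_) (norm_sum_mul_le _ _) (norm_nonneg _)
    (mul_nonneg (Real.sqrt_nonneg _) (Real.sqrt_nonneg _))
  rw [hζ, zetaNorm]

theorem enorm_btri_le {L : ℝ} (hL : 0 < L) (u v w : Coeff) :
    ‖btri L u v w‖ₑ ≤ ENNReal.ofReal (L ^ 3 * (2 * Real.pi / L)) *
      conv3 (coefENorm u) (fun m => ‖latticeVec m‖ₑ * coefENorm v m) (coefENorm w) := by
  have hterm : ∀ k m : K3,
      ‖∑ i, ∑ j, u k j * (Complex.I * (zeta L m j : ℂ)) * v m i * w (-(k + m)) i‖ₑ ≤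
        ENNReal.ofReal (2 * Real.pi / L) *
          (coefENorm u k * ((‖latticeVec m‖ₑ * coefENorm v m) * coefENorm w (-(k + m)))) := by
    intro k m
    rw [← ofReal_norm]
    refine (ENNReal.ofReal_le_ofReal (norm_btri_summand_le L u v w k m)).trans_eq ?_
    rw [zetaNorm_eq hL, coefENorm, coefENorm, coefENorm, ← ofReal_norm,
      show ∀ a b c d e : ℝ, a * (b * c) * (d * e) = b * (a * ((c * d) * e)) by intros; ring]
    rw [ENNReal.ofReal_mul (by positivity), ENNReal.ofReal_mul (by positivity),
      ENNReal.ofReal_mul (by positivity), ENNReal.ofReal_mul (by positivity)]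
  calc ‖btri L u v w‖ₑ
      = ENNReal.ofReal (L ^ 3) * ‖∑' k, ∑' m, ∑ i, ∑ j,
          u k j * (Complex.I * (zeta L m j : ℂ)) * v m i * w (-(k + m)) i‖ₑ := by
        rw [btri, enorm_mul, ← ofReal_norm (_ ^ 3), norm_pow, Complex.norm_real,
          Real.norm_of_nonneg hL.le]
    _ ≤ ENNReal.ofReal (L ^ 3) * ∑' k, ∑' m, ENNReal.ofReal (2 * Real.pi / L) *
          (coefENorm u k * ((‖latticeVec m‖ₑ * coefENorm v m) * coefENorm w (-(k + m)))) := by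
        gcongr
        refine enorm_tsum_le_tsum_enorm.trans (ENNReal.tsum_le_tsum fun k => ?_)
        exact enorm_tsum_le_tsum_enorm.trans (ENNReal.tsum_le_tsum (hterm k))
    _ = _ := by
        rw [conv3, ENNReal.ofReal_mul (by positivity)]
        simp only [ENNReal.tsum_mul_left]
        ring

theorem l2norm_coefENorm {L s : ℝ} (hL : 0 < L) {x : Coeff} (hx : MemV L s x) :
    l2norm (fun k => ‖latticeVec k‖ₑ ^ s * coefENorm x k) =
      ENNReal.ofReal ((2 * Real.pi / L) ^ (-s) * normV L s x) := by
  have hc : 0 < 2 * Real.pi / L := by positivity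
  have hterm : ∀ k, (‖latticeVec k‖ₑ ^ s * coefENorm x k) ^ (2 : ℝ) = ENNReal.ofReal
      ((2 * Real.pi / L) ^ (-(2 * s)) * (zetaNorm L k ^ (2 * s) * coefNormSq (x k))) := by
    intro k
    rcases eq_or_ne k 0 with rfl | hk
    · simp [coefENorm_zero hx.mean_zero, hx.mean_zero, coefNormSq]
    have ha : 0 < ‖latticeVec k‖ := one_pos.trans_le (one_le_norm_latticeVec hk)
    rw [← ofReal_norm, ENNReal.ofReal_rpow_of_pos ha, coefENorm,
      ← ENNReal.ofReal_mul (by positivity),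
      ENNReal.ofReal_rpow_of_nonneg (by positivity) zero_le_two]
    congr 1
    rw [zetaNorm_eq hL, Real.mul_rpow hc.le ha.le, Real.mul_rpow (by positivity)
      (Real.sqrt_nonneg _), ← Real.rpow_mul ha.le, Real.rpow_two,
      Real.sq_sqrt (coefNormSq_nonneg _), ← mul_assoc, ← mul_assoc, ← Real.rpow_add hc,
      neg_add_cancel, Real.rpow_zero, one_mul, mul_comm s 2]
  rw [l2norm, tsum_congr hterm, ← ENNReal.ofReal_tsum_of_nonneg (fun k => mul_nonneg
      (by positivity) (mul_nonneg (Real.rpow_nonneg (zetaNorm_nonneg L k) _) (coefNormSq_nonneg _)))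
    (hx.norm_summable.mul_left _), tsum_mul_left, ← normVsq,
    ENNReal.ofReal_rpow_of_nonneg (mul_nonneg (by positivity) (normVsq_nonneg L s x))
      (by norm_num),
    normV, Real.sqrt_eq_rpow, Real.mul_rpow (by positivity) (normVsq_nonneg L s x),
    ← Real.rpow_mul hc.le]
  ring_nf

theorem enorm_rpow_mul_enorm_mul_coefENorm {x : Coeff} (hx : x 0 = 0) (s : ℝ) (k : K3) :
    ‖latticeVec k‖ₑ ^ s * (‖latticeVec k‖ₑ * coefENorm x k) =
      ‖latticeVec k‖ₑ ^ (s + 1) * coefENorm x k := by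
  rcases eq_or_ne k 0 with rfl | hk
  · simp [coefENorm_zero hx]
  have hx0 : ‖latticeVec k‖ₑ ≠ 0 := by
    rw [← ofReal_norm, ENNReal.ofReal_ne_zero_iff]
    exact one_pos.trans_le (one_le_norm_latticeVec hk)
  rw [ENNReal.rpow_add _ _ hx0 enorm_ne_top, ENNReal.rpow_one, mul_assoc]

theorem norm_btri_le {L s1 s2 s3 : ℝ} (hL : 0 < L) {C : ℝ≥0∞} (hC : C ≠ ∞)
    (hconv : ∀ U V W : K3 → ℝ≥0∞, U 0 = 0 → V 0 = 0 → W 0 = 0 →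
      conv3 U V W ≤ C * (l2norm (fun k => ‖latticeVec k‖ₑ ^ s1 * U k) *
        (l2norm (fun k => ‖latticeVec k‖ₑ ^ s2 * V k) *
          l2norm (fun k => ‖latticeVec k‖ₑ ^ s3 * W k))))
    {u v w : Coeff} (hu : MemV L s1 u) (hv : MemV L (s2 + 1) v) (hw : MemV L s3 w) :
    ‖btri L u v w‖ ≤ L ^ 3 * (2 * Real.pi / L) ^ (-(s1 + s2 + s3)) * C.toReal *
      normV L s1 u * normV L (s2 + 1) v * normV L s3 w := by
  have hc : 0 < 2 * Real.pi / L := by positivity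
  have hbound := (enorm_btri_le hL u v w).trans (mul_le_mul_right (hconv _ _ _
    (coefENorm_zero hu.mean_zero) (by simp [coefENorm_zero hv.mean_zero])
    (coefENorm_zero hw.mean_zero)) _)
  simp only [enorm_rpow_mul_enorm_mul_coefENorm hv.mean_zero, l2norm_coefENorm hL hu,
    l2norm_coefENorm hL hv, l2norm_coefENorm hL hw] at hbound
  have hreal : ∀ s x, (ENNReal.ofReal ((2 * Real.pi / L) ^ (-s) * normV L s x)).toReal =
      (2 * Real.pi / L) ^ (-s) * normV L s x := fun s x =>
    ENNReal.toReal_ofReal (mul_nonneg (by positivity) (normV_nonneg L s x))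
  have hscale : 2 * Real.pi / L * ((2 * Real.pi / L) ^ (-s1) * ((2 * Real.pi / L) ^ (-(s2 + 1)) *
      (2 * Real.pi / L) ^ (-s3))) = (2 * Real.pi / L) ^ (-(s1 + s2 + s3)) := by
    rw [← Real.rpow_add hc, ← Real.rpow_add hc, mul_comm, ← Real.rpow_add_one hc.ne']
    congr 1
    ring
  calc ‖btri L u v w‖
      ≤ L ^ 3 * (2 * Real.pi / L) * (C.toReal * ((2 * Real.pi / L) ^ (-s1) * normV L s1 u *
          ((2 * Real.pi / L) ^ (-(s2 + 1)) * normV L (s2 + 1) v *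
            ((2 * Real.pi / L) ^ (-s3) * normV L s3 w)))) := by
        simpa only [toReal_enorm, ENNReal.toReal_mul, hreal,
          ENNReal.toReal_ofReal (by positivity : 0 ≤ L ^ 3 * (2 * Real.pi / L))]
          using ENNReal.toReal_mono (by finiteness) hbound
    _ = _ := by rw [← hscale]; ring

end Fourier

/-- Lemma 2.1. If `s₁,s₂,s₃ ∈ ℝ` satisfy either `sᵢ+sⱼ ≥ 0` for `i ≠ j` and
`s₁+s₂+s₃ > 3/2`, or `sᵢ+sⱼ > 0` for `i ≠ j` and `s₁+s₂+s₃ ≥ 3/2`, then the trilinear form `b`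
extends continuously to `V^{s₁} × V^{s₂+1} × V^{s₃}`: there is a constant `c` such that
`|b(u,v,w)| ≤ c ‖u‖_{s₁} ‖v‖_{s₂+1} ‖w‖_{s₃}`. -/
theorem trilinear_estimate (L s1 s2 s3 : ℝ) (hL : 0 < L)
    (hcond : (0 ≤ s1 + s2 ∧ 0 ≤ s1 + s3 ∧ 0 ≤ s2 + s3 ∧ 3 / 2 < s1 + s2 + s3) ∨
      (0 < s1 + s2 ∧ 0 < s1 + s3 ∧ 0 < s2 + s3 ∧ 3 / 2 ≤ s1 + s2 + s3)) :
    ∃ c : ℝ, 0 < c ∧ ∀ u v w : Coeff, MemV L s1 u → MemV L (s2 + 1) v → MemV L s3 w →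
      ‖btri L u v w‖ ≤ c * normV L s1 u * normV L (s2 + 1) v * normV L s3 w := by
  obtain ⟨C, hC, hconv⟩ := AdmissibleExponents.exists_conv3_le hcond
  refine ⟨L ^ 3 * (2 * Real.pi / L) ^ (-(s1 + s2 + s3)) * C.toReal + 1, by positivity,
    fun u v w hu hv hw => (norm_btri_le hL hC hconv hu hv hw).trans ?_⟩
  have := normV_nonneg L s1 u
  have := normV_nonneg L (s2 + 1) v
  have := normV_nonneg L s3 w
  gcongr
  linarith

end NS3D
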